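/- arXiv:2108.02188 — 6 statements merged into one kernel-verified Lean document; each statement's English description precedes it below -/
import Mathlib

section
/- Let (Ω,F,P) be a probability space, (F_t)_{t≥0} a filtration of F, and T a stopping time with respect to (F_t). If there exists an instance ((X_t)_{t≥0}, (L^t_1,…,L^t_n)_{t≥0}) of an n-dimensional generalized lexicographic ranking supermartingale (GLexRSM) for T over (Ω,F,P), then P[T < ∞] = 1. -/
open MeasureTheory Set
open scoped ENNReal

/-- An instance of an `n`-dimensional generalized lexicographic ranking supermartingale
(GLexRSM) for a stopping time `T` (with values in `ℕ∞`): the process `X` together with the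
`ℱ t`-measurable sets `L t j` partitioning `{T > t}`, satisfying measurability/integrability,
the lexicographic expected decrease conditions, partial non-negativity, and expected leftward
non-negativity. -/
def IsGLexRSMInstance {Ω : Type*} {m : MeasurableSpace Ω} (μ : Measure Ω)
    (ℱ : Filtration ℕ m) (T : Ω → ℕ∞) {n : ℕ}
    (X : ℕ → Fin n → Ω → ℝ) (L : ℕ → Fin n → Set Ω) : Prop :=
  -- the sets `L t j` partition `{T > t}`
  (∀ t : ℕ, (⋃ j, L t j) = {ω | (t : ℕ∞) < T ω}) ∧
  (∀ t : ℕ, ∀ j j' : Fin n, j ≠ j' → Disjoint (L t j) (L t j')) ∧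
  (∀ t : ℕ, ∀ j : Fin n, MeasurableSet[ℱ t] (L t j)) ∧
  -- (1) each `X t j` is `ℱ t`-measurable
  (∀ t : ℕ, ∀ j : Fin n, StronglyMeasurable[ℱ t] (X t j)) ∧
  -- (2) the relevant conditional expectations exist: each `X t j` is integrable
  (∀ t : ℕ, ∀ j : Fin n, Integrable (X t j) μ) ∧
  -- (3a) expected non-increase on `⋃_{j' ≥ j} L t j'`
  (∀ t : ℕ, ∀ j : Fin n, ∀ ω ∈ ⋃ j' ≥ j, L t j',
      (μ[X (t + 1) j | ℱ t]) ω ≤ X t j ω) ∧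
  -- (3b) expected decrease by 1 on `L t j`
  (∀ t : ℕ, ∀ j : Fin n, ∀ ω ∈ L t j,
      (μ[X (t + 1) j | ℱ t]) ω ≤ X t j ω - 1) ∧
  -- (3c) non-negativity on `⋃_{j' ≥ j} L t j'`
  (∀ t : ℕ, ∀ j : Fin n, ∀ ω ∈ ⋃ j' ≥ j, L t j', 0 ≤ X t j ω) ∧
  -- (3d) expected leftward non-negativity, where `L (t+1) 0 = {T ≤ t+1}`
  (∀ t : ℕ, ∀ j : Fin n, ∀ ω ∈ ⋃ j' ≥ j, L t j',
      0 ≤ (μ[Set.indicator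
              ({ω' | T ω' ≤ ((t + 1 : ℕ) : ℕ∞)} ∪ ⋃ j' < j, L (t + 1) j')
              (X (t + 1) j) | ℱ t]) ω)

/-!
Fix a level `j` and a start time `s`, and let `A t` be the event that the path stays at levels
`≥ j` throughout `[s, t]`. On `A t` the `j`-th component is nonnegative, does not increase in
expectation, and drops by one in expectation on `L t j`; by (3d) the paths leaving `A` at time
`t + 1` carry nonnegative mass away. Hence
`∫_{A (t+1)} X (t+1) j + P (A t ∩ L t j) ≤ ∫_{A t} X t j`, so `∑ₜ P (A t ∩ L t j) < ∞` and by
Borel–Cantelli almost every path lies in `A t ∩ L t j` only finitely often. But a path with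
`T = ∞` has a least level `j` that it visits infinitely often, and from some time `s` on it stays
at or above `j`, so it lies in `A t ∩ L t j` for infinitely many `t`.
-/

open Filter

section CondExp

variable {Ω : Type*} {m m₀ : MeasurableSpace Ω} {μ : Measure[m₀] Ω} {s : Set Ω} {f g : Ω → ℝ}

theorem setIntegral_le_of_condExp_le (hm : m ≤ m₀) [SigmaFinite (μ.trim hm)]
    (hf : Integrable f μ) (hg : IntegrableOn g s μ) (hs : MeasurableSet[m] s)
    (hfg : ∀ ω ∈ s, μ[f | m] ω ≤ g ω) : ∫ ω in s, f ω ∂μ ≤ ∫ ω in s, g ω ∂μ := by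
  rw [← setIntegral_condExp hm hf hs]
  exact setIntegral_mono_on integrable_condExp.integrableOn hg (hm s hs) hfg

theorem setIntegral_nonneg_of_condExp_nonneg (hm : m ≤ m₀) [SigmaFinite (μ.trim hm)]
    (hf : Integrable f μ) (hs : MeasurableSet[m] s) (hf₀ : ∀ ω ∈ s, 0 ≤ μ[f | m] ω) :
    0 ≤ ∫ ω in s, f ω ∂μ := by
  rw [← setIntegral_condExp hm hf hs]
  exact setIntegral_nonneg (hm s hs) hf₀

end CondExp

theorem summable_of_le_sub_succ {a b : ℕ → ℝ} (ha : ∀ k, 0 ≤ a k) (hb : ∀ k, 0 ≤ b k)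
    (hab : ∀ k, b k ≤ a k - a (k + 1)) : Summable b := by
  have hsum : ∀ N, ∑ k ∈ Finset.range N, b k + a N ≤ a 0 := by
    intro N
    induction N with
    | zero => simp
    | succ N ih => rw [Finset.sum_range_succ]; linarith [hab N]
  exact summable_of_sum_range_le hb fun N => by linarith [hsum N, ha N]

theorem Filter.exists_frequently_eq_and_eventually_le {α β : Type*} [LinearOrder α] [Finite α]
    {l : Filter β} [l.NeBot] (f : β → α) :
    ∃ a, (∃ᶠ x in l, f x = a) ∧ ∀ᶠ x in l, a ≤ f x := by
  have hvisited : ∃ a, ∃ᶠ x in l, f x = a := by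
    by_contra! h
    obtain ⟨x, hx⟩ := (eventually_all.2 h).exists
    exact hx (f x) rfl
  obtain ⟨a, ha, hmin⟩ := WellFounded.has_min wellFounded_lt {a | ∃ᶠ x in l, f x = a} hvisited
  have hbelow : ∀ᶠ x in l, ∀ b < a, f x ≠ b := eventually_all.2 fun b => by
    by_cases hb : b < a
    · exact (not_frequently.1 fun hfb => hmin b hfb hb).mono fun x hx _ => hx
    · exact .of_forall fun x hlt => absurd hlt hb
  exact ⟨a, ha, hbelow.mono fun x hx => not_lt.1 fun hlt => hx _ hlt rfl⟩

section Levels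

variable {Ω : Type*} {n : ℕ} (L : ℕ → Fin n → Set Ω)

def levelGE (j : Fin n) (t : ℕ) : Set Ω := ⋃ j' ≥ j, L t j'

def stayLevelGE (j : Fin n) (s t : ℕ) : Set Ω := ⋂ u ∈ Icc s t, levelGE L j u

variable {L} {j : Fin n} {s t : ℕ}

theorem stayLevelGE_subset_levelGE (hst : s ≤ t) : stayLevelGE L j s t ⊆ levelGE L j t :=
  biInter_subset_of_mem ⟨hst, le_rfl⟩

theorem stayLevelGE_succ (hst : s ≤ t + 1) :
    stayLevelGE L j s (t + 1) = stayLevelGE L j s t ∩ levelGE L j (t + 1) := by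
  rw [stayLevelGE, ← insert_Icc_right_eq_Icc_add_one hst, biInter_insert, inter_comm, stayLevelGE]

theorem measurableSet_levelGE {m : MeasurableSpace Ω} (hL : ∀ j, MeasurableSet (L t j)) :
    MeasurableSet (levelGE L j t) :=
  .biUnion (to_countable _) fun j _ => hL j

theorem measurableSet_stayLevelGE {m : MeasurableSpace Ω} (ℱ : Filtration ℕ m)
    (hL : ∀ t j, MeasurableSet[ℱ t] (L t j)) : MeasurableSet[ℱ t] (stayLevelGE L j s t) :=
  .biInter (to_countable _) fun _ hu => ℱ.mono hu.2 _ (measurableSet_levelGE (hL _))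

theorem compl_levelGE {T : Ω → ℕ∞} (hpart : (⋃ j, L t j) = {ω | (t : ℕ∞) < T ω})
    (hdisj : ∀ j j', j ≠ j' → Disjoint (L t j) (L t j')) :
    (levelGE L j t)ᶜ = {ω | T ω ≤ t} ∪ ⋃ j' < j, L t j' := by
  ext ω
  rcases le_or_gt (T ω) t with hT | hT
  · have hnot : ∀ j', ω ∉ L t j' := fun j' hω =>
      not_lt.2 hT (hpart ▸ mem_iUnion.2 ⟨j', hω⟩ : ω ∈ {ω | (t : ℕ∞) < T ω})
    simp [levelGE, hT, hnot]
  · obtain ⟨k, hk⟩ := mem_iUnion.1 (hpart.symm ▸ hT : ω ∈ ⋃ j, L t j)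
    have hunique : ∀ j', ω ∈ L t j' ↔ j' = k := fun j' =>
      ⟨fun h => by_contra fun hne => disjoint_left.1 (hdisj _ _ hne) h hk, fun h => h ▸ hk⟩
    simp only [levelGE, ge_iff_le, compl_iUnion, mem_iInter, mem_compl_iff, hunique, mem_union,
      mem_ofPred_eq, not_le.2 hT, mem_iUnion, exists_prop, exists_eq_right, false_or]
    exact ⟨fun h => not_le.1 fun hle => h k hle rfl, fun h i hi hik => (hik ▸ hi).not_gt h⟩

theorem exists_mem_limsup_stayLevelGE_inter {ω : Ω} (hω : ∀ t, ∃ j, ω ∈ L t j) :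
    ∃ j s, ω ∈ limsup (fun t => stayLevelGE L j s t ∩ L t j) atTop := by
  choose level hlevel using hω
  obtain ⟨j, hfreq, hge⟩ := exists_frequently_eq_and_eventually_le (l := atTop) level
  obtain ⟨s, hs⟩ := eventually_atTop.1 hge
  refine ⟨j, s, mem_limsup_iff_frequently_mem.2 ?_⟩
  refine hfreq.mono fun t hjt =>
    ⟨mem_iInter₂.2 fun u hu => mem_iUnion₂.2 ⟨level u, hs u hu.1, hlevel u⟩, hjt ▸ hlevel t⟩

end Levels

namespace IsGLexRSMInstance

variable {Ω : Type*} {m : MeasurableSpace Ω} {μ : Measure Ω} {ℱ : Filtration ℕ m} {T : Ω → ℕ∞}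
  {n : ℕ} {X : ℕ → Fin n → Ω → ℝ} {L : ℕ → Fin n → Set Ω}

theorem setIntegral_stayLevelGE_nonneg (hinst : IsGLexRSMInstance μ ℱ T X L) {j : Fin n}
    {s t : ℕ} (hst : s ≤ t) : 0 ≤ ∫ ω in stayLevelGE L j s t, X t j ω ∂μ := by
  obtain ⟨-, -, hLmeas, -, -, -, -, h3c, -⟩ := hinst
  exact setIntegral_nonneg (ℱ.le _ _ (measurableSet_stayLevelGE ℱ hLmeas)) fun ω hω =>
    h3c t j ω (stayLevelGE_subset_levelGE hst hω)

variable [IsFiniteMeasure μ]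

theorem integral_stayLevelGE_succ_add_le (hinst : IsGLexRSMInstance μ ℱ T X L) {j : Fin n}
    {s t : ℕ} (hst : s ≤ t) :
    ∫ ω in stayLevelGE L j s (t + 1), X (t + 1) j ω ∂μ + μ.real (stayLevelGE L j s t ∩ L t j) ≤
      ∫ ω in stayLevelGE L j s t, X t j ω ∂μ := by
  obtain ⟨hpart, hdisj, hLmeas, -, hXint, h3a, h3b, -, h3d⟩ := hinst
  set A := stayLevelGE L j s t
  have hA : MeasurableSet[ℱ t] A := measurableSet_stayLevelGE ℱ hLmeas
  have hU : MeasurableSet (levelGE L j (t + 1)) :=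
    ℱ.le _ _ (measurableSet_levelGE (hLmeas (t + 1)))
  have hL : MeasurableSet (L t j) := ℱ.le _ _ (hLmeas t j)
  have hLint : Integrable ((L t j).indicator (1 : Ω → ℝ)) μ := (integrable_const 1).indicator hL
  have hleave : 0 ≤ ∫ ω in A \ levelGE L j (t + 1), X (t + 1) j ω ∂μ := by
    rw [sdiff_eq, ← setIntegral_indicator hU.compl]
    refine setIntegral_nonneg_of_condExp_nonneg (ℱ.le t) ((hXint _ j).indicator hU.compl) hA
      fun ω hω => ?_
    rw [compl_levelGE (hpart _) (hdisj _)]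
    exact h3d t j ω (stayLevelGE_subset_levelGE hst hω)
  have hdecrease :
      ∫ ω in A, X (t + 1) j ω ∂μ ≤ ∫ ω in A, (X t j ω - (L t j).indicator 1 ω) ∂μ := by
    refine setIntegral_le_of_condExp_le (ℱ.le t) (hXint _ j)
      ((hXint t j).sub hLint).integrableOn hA fun ω hω => ?_
    by_cases hωL : ω ∈ L t j
    · simpa [hωL] using h3b t j ω hωL
    · simpa [hωL] using h3a t j ω (stayLevelGE_subset_levelGE hst hω)
  rw [stayLevelGE_succ (hst.trans t.le_succ)]
  rw [integral_sub (hXint t j).integrableOn hLint.integrableOn,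
    integral_indicator_one hL, measureReal_restrict_apply hL, inter_comm] at hdecrease
  linarith [integral_inter_add_sdiff hU (hXint (t + 1) j).integrableOn (s := A) (μ := μ)]

theorem summable_measureReal_stayLevelGE_inter (hinst : IsGLexRSMInstance μ ℱ T X L) (j : Fin n)
    (s : ℕ) : Summable fun t => μ.real (stayLevelGE L j s t ∩ L t j) := by
  refine (summable_nat_add_iff s).1 <| summable_of_le_sub_succ
    (a := fun k => ∫ ω in stayLevelGE L j s (k + s), X (k + s) j ω ∂μ)
    (fun k => hinst.setIntegral_stayLevelGE_nonneg (Nat.le_add_left s k))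
    (fun _ => measureReal_nonneg) fun k => ?_
  have := hinst.integral_stayLevelGE_succ_add_le (Nat.le_add_left s k) (j := j)
  rw [add_right_comm]
  linarith

theorem measure_limsup_stayLevelGE_inter_eq_zero (hinst : IsGLexRSMInstance μ ℱ T X L)
    (j : Fin n) (s : ℕ) : μ (limsup (fun t => stayLevelGE L j s t ∩ L t j) atTop) = 0 := by
  refine measure_limsup_atTop_eq_zero ?_
  have := (hinst.summable_measureReal_stayLevelGE_inter j s).tsum_ofReal_ne_top
  simpa only [ofReal_measureReal (measure_ne_top μ _)] using this

theorem measure_eq_top_eq_zero (hinst : IsGLexRSMInstance μ ℱ T X L) : μ {ω | T ω = ⊤} = 0 := by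
  refine measure_mono_null (fun ω hω => ?_) (measure_iUnion_null fun j =>
    measure_iUnion_null (hinst.measure_limsup_stayLevelGE_inter_eq_zero j))
  obtain ⟨hpart, -⟩ := hinst
  have hlevel : ∀ t, ∃ j, ω ∈ L t j := fun t => mem_iUnion.1 <| by
    rw [hpart t, mem_ofPred_eq, show T ω = ⊤ from hω]
    exact ENat.natCast_lt_top t
  obtain ⟨j, s, h⟩ := exists_mem_limsup_stayLevelGE_inter hlevel
  exact mem_iUnion₂.2 ⟨j, s, h⟩

end IsGLexRSMInstance

theorem glexrsm_almost_sure_termination_general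
    {Ω : Type*} {m : MeasurableSpace Ω} (μ : Measure Ω) [IsProbabilityMeasure μ]
    (ℱ : Filtration ℕ m) (T : Ω → ℕ∞)
    {n : ℕ} (X : ℕ → Fin n → Ω → ℝ) (L : ℕ → Fin n → Set Ω)
    (hinst : IsGLexRSMInstance μ ℱ T X L) :
    μ {ω | T ω < ⊤} = 1 := by
  refine (measure_congr (ae_eq_univ.2 ?_)).trans measure_univ
  simpa only [compl_ofPred, lt_top_iff_ne_top, not_not] using hinst.measure_eq_top_eq_zero

/-- **Theorem (soundness of GLexRSMs).** If there is an instance of a GLexRSM for the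
stopping time `T`, then `T` is almost surely finite, i.e. `P[T < ∞] = 1`. -/
theorem glexrsm_almost_sure_termination
    {Ω : Type*} {m : MeasurableSpace Ω} (μ : Measure Ω) [IsProbabilityMeasure μ]
    (ℱ : Filtration ℕ m) (T : Ω → ℕ∞)
    (hT : ∀ t : ℕ, MeasurableSet[ℱ t] {ω | T ω ≤ (t : ℕ∞)})
    {n : ℕ} (X : ℕ → Fin n → Ω → ℝ) (L : ℕ → Fin n → Set Ω)
    (hinst : IsGLexRSMInstance μ ℱ T X L) :
    μ {ω | T ω < ⊤} = 1 :=
  glexrsm_almost_sure_termination_general μ ℱ T X L hinst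
end

section
/- Let ((X_t)_{t≥0}, (L^t_1,…,L^t_n)_{t≥0}) be an instance of an n-dimensional GLexRSM for a stopping time T, and suppose P[T = ∞] > 0. Then there exist an index 1 ≤ k ≤ n and natural numbers s, M such that the set B of all ω ∈ Ω satisfying (1) T(ω) = ∞, (2) X_s[k](ω) ≤ M, (3) for each t ≥ s the level of ω at step t is at least k, and (4) the level of ω equals k at infinitely many steps t, has positive measure, i.e. P[B] > 0. -/
open MeasureTheory Set
open scoped ENNReal

/-!
Every run `ω` with `T ω = ∞` has a level at every step, and as there are only finitely many
levels, some level `k` is visited infinitely often; taking `k` minimal, the run eventually stays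
at levels `≥ k`, from some step `s` on. Bounding `X s k ω` by a natural number `M`, the runs
with `T = ∞` are covered by the countably many sets `B k s M`, so one of them has positive
measure.
-/

open Filter

theorem Filter.exists_frequently_and_eventually_exists_ge {α ι : Type*} [LinearOrder ι]
    [Finite ι] {l : Filter α} [l.NeBot] {p : α → ι → Prop} (hp : ∀ a, ∃ j, p a j) :
    ∃ k, (∃ᶠ a in l, p a k) ∧ ∀ᶠ a in l, ∃ j ≥ k, p a j := by
  have hfreq : {j | ∃ᶠ a in l, p a j}.Nonempty := by
    by_contra! hnone
    have hnever : ∀ᶠ a in l, ∀ j, ¬ p a j :=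
      eventually_all.2 fun j => not_frequently.1 (eq_empty_iff_forall_notMem.1 hnone j)
    obtain ⟨a, ha⟩ := hnever.exists
    obtain ⟨j, hj⟩ := hp a
    exact ha j hj
  obtain ⟨k, hk, hkmin⟩ := exists_min_image _ id (toFinite _) hfreq
  have hbelow : ∀ᶠ a in l, ∀ j < k, ¬ p a j :=
    eventually_all.2 fun j => eventually_imp_distrib_left.2 fun hjk =>
      not_frequently.1 fun hj => (hkmin j hj).not_gt hjk
  refine ⟨k, hk, hbelow.mono fun a ha => ?_⟩
  obtain ⟨j, hj⟩ := hp a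
  exact ⟨j, not_lt.1 fun hjk => ha j hjk hj, hj⟩

namespace IsGLexRSMInstance

variable {Ω : Type*} {m : MeasurableSpace Ω} {μ : Measure Ω} {ℱ : Filtration ℕ m} {T : Ω → ℕ∞}
  {n : ℕ} {X : ℕ → Fin n → Ω → ℝ} {L : ℕ → Fin n → Set Ω}

theorem exists_mem_level_of_eq_top (hinst : IsGLexRSMInstance μ ℱ T X L) {ω : Ω} (hω : T ω = ⊤)
    (t : ℕ) : ∃ j, ω ∈ L t j :=
  mem_iUnion.1 <| (hinst.1 t).symm ▸ show (t : ℕ∞) < T ω from hω ▸ ENat.natCast_lt_top t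

theorem eq_top_subset_iUnion_level_sets (hinst : IsGLexRSMInstance μ ℱ T X L) :
    {ω | T ω = ⊤} ⊆ ⋃ (k : Fin n) (s : ℕ) (M : ℕ),
      {ω | T ω = ⊤ ∧ X s k ω ≤ (M : ℝ) ∧
        (∀ t : ℕ, s ≤ t → ω ∈ ⋃ j' ≥ k, L t j') ∧
        {t : ℕ | ω ∈ L t k}.Infinite} := by
  intro ω hω
  obtain ⟨k, hfreq, hev⟩ := exists_frequently_and_eventually_exists_ge
    (l := atTop) (hinst.exists_mem_level_of_eq_top hω)
  obtain ⟨s, hs⟩ := eventually_atTop.1 hev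
  simp only [mem_iUnion]
  exact ⟨k, s, ⌈X s k ω⌉₊, hω, Nat.le_ceil _, fun t ht =>
    let ⟨j, hjk, hj⟩ := hs t ht; ⟨j, hjk, hj⟩,
    Nat.frequently_atTop_iff_infinite.1 hfreq⟩

end IsGLexRSMInstance

theorem glexrsm_exists_positive_measure_level_set_general
    {Ω : Type*} {m : MeasurableSpace Ω} (μ : Measure Ω)
    (ℱ : Filtration ℕ m) (T : Ω → ℕ∞)
    {n : ℕ} (X : ℕ → Fin n → Ω → ℝ) (L : ℕ → Fin n → Set Ω)
    (hinst : IsGLexRSMInstance μ ℱ T X L)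
    (hpos : 0 < μ {ω | T ω = ⊤}) :
    ∃ (k : Fin n) (s M : ℕ),
      0 < μ {ω | T ω = ⊤ ∧ X s k ω ≤ (M : ℝ) ∧
        (∀ t : ℕ, s ≤ t → ω ∈ ⋃ j' ≥ k, L t j') ∧
        {t : ℕ | ω ∈ L t k}.Infinite} := by
  have hcover := (measure_mono hinst.eq_top_subset_iUnion_level_sets).trans_lt' hpos
  obtain ⟨k, hk⟩ := exists_measure_pos_of_not_measure_iUnion_null hcover.ne'
  obtain ⟨s, hs⟩ := exists_measure_pos_of_not_measure_iUnion_null hk.ne'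
  obtain ⟨M, hM⟩ := exists_measure_pos_of_not_measure_iUnion_null hs.ne'
  exact ⟨k, s, M, hM⟩

/-- If a GLexRSM instance exists for `T` but `P[T = ∞] > 0`, then there exist a component
`k`, a time `s`, and a bound `M` such that the set `B` of runs `ω` with (1) `T ω = ∞`,
(2) `X s k ω ≤ M`, (3) level of `ω` at every step `t ≥ s` is at least `k`, and
(4) the level of `ω` equals `k` at infinitely many steps, has positive measure. -/
theorem glexrsm_exists_positive_measure_level_set
    {Ω : Type*} {m : MeasurableSpace Ω} (μ : Measure Ω) [IsProbabilityMeasure μ]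
    (ℱ : Filtration ℕ m) (T : Ω → ℕ∞)
    (hT : ∀ t : ℕ, MeasurableSet[ℱ t] {ω | T ω ≤ (t : ℕ∞)})
    {n : ℕ} (X : ℕ → Fin n → Ω → ℝ) (L : ℕ → Fin n → Set Ω)
    (hinst : IsGLexRSMInstance μ ℱ T X L)
    (hpos : 0 < μ {ω | T ω = ⊤}) :
    ∃ (k : Fin n) (s M : ℕ),
      0 < μ {ω | T ω = ⊤ ∧ X s k ω ≤ (M : ℝ) ∧
        (∀ t : ℕ, s ≤ t → ω ∈ ⋃ j' ≥ k, L t j') ∧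
        {t : ℕ | ω ∈ L t k}.Infinite} :=
  glexrsm_exists_positive_measure_level_set_general μ ℱ T X L hinst hpos
end

section
/- Let ((X_t)_{t≥0}, (L^t_1,…,L^t_n)_{t≥0}) be an instance of an n-dimensional GLexRSM for a stopping time T, and fix 1 ≤ k ≤ n and s, M ∈ ℕ. Define D = {ω ∈ Ω | X_s[k](ω) ≤ M and ω ∈ ∪_{j=k}^n L^s_j}, the stopping time F(ω) = inf{t ≥ s | ω ∉ ∪_{j'=k}^n L^t_{j'}}, and the process (Y_t)_{t≥0} by: Y_t(ω) = 0 if ω ∉ D; Y_t(ω) = M if ω ∈ D and t < s; Y_t(ω) = X_t[k](ω) if ω ∈ D, t ≥ s and F(ω) > t; and Y_t(ω) = X_{F(ω)}[k](ω) otherwise. Then for each t ≥ s it holds that E[Y_{t+1}] ≤ E[Y_t] − P[L^t_k ∩ D ∩ {F > t}]. -/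
open MeasureTheory Set
open scoped Classical
open scoped ENNReal

/-!
For `t ≥ s`, on `D` the process `Y` is `X · k` stopped at the first exit time `F` from
`⋃ j ≥ k, L · j`, so `Y (t+1) - Y t = 1_A (X (t+1) k - X t k)` with `A = D ∩ {t < F}`, an
`ℱ t`-measurable subset of `⋃ j ≥ k, L t j`. Integrating over `A` and replacing `X (t+1) k` by its
conditional expectation given `ℱ t`, condition (3a) on `A` and (3b) on `L t k` give the decrease
by `P[A ∩ L t k]`.
-/

section ExitTime

variable {Ω : Type*}

noncomputable def exitTimeAfter (B : ℕ → Set Ω) (s : ℕ) (ω : Ω) : ℕ∞ :=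
  sInf {u : ℕ∞ | ∃ r : ℕ, u = r ∧ s ≤ r ∧ ω ∉ B r}

theorem natCast_lt_exitTimeAfter_iff {B : ℕ → Set Ω} {s t : ℕ} {ω : Ω} :
    (t : ℕ∞) < exitTimeAfter B s ω ↔ ∀ r, s ≤ r → r ≤ t → ω ∈ B r := by
  rw [← ENat.natCast_add_one_le_iff, exitTimeAfter, le_sInf_iff]
  simp only [mem_ofPred_eq, forall_exists_index, and_imp]
  constructor
  · intro h r hsr hrt
    by_contra hr
    have := h _ r rfl hsr hr
    rw [ENat.natCast_add_one_le_iff, Nat.cast_lt] at this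
    omega
  · rintro h _ r rfl hsr hr
    rw [ENat.natCast_add_one_le_iff, Nat.cast_lt]
    by_contra hrt
    exact hr (h r hsr (not_lt.mp hrt))

theorem measurableSet_natCast_lt_exitTimeAfter {m : MeasurableSpace Ω} {ℱ : Filtration ℕ m}
    {B : ℕ → Set Ω} (hB : ∀ r, MeasurableSet[ℱ r] (B r)) (s t : ℕ) :
    MeasurableSet[ℱ t] {ω | (t : ℕ∞) < exitTimeAfter B s ω} := by
  have : {ω | (t : ℕ∞) < exitTimeAfter B s ω} = ⋂ r ∈ Icc s t, B r := by
    ext ω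
    simp only [natCast_lt_exitTimeAfter_iff, mem_ofPred_eq, mem_iInter, mem_Icc, and_imp]
  rw [this]
  exact MeasurableSet.biInter (to_countable _) fun r hr => ℱ.mono hr.2 _ (hB r)

end ExitTime

section StoppedProcess

variable {Ω E : Type*} (u : ℕ → Ω → E) (τ : Ω → ℕ∞)

/-- Mathlib's `stoppedProcess` takes `WithTop ℕ`-valued times, whose casts and order instances do
not match those of `ℕ∞` syntactically. -/
noncomputable def enatStoppedProcess (t : ℕ) (ω : Ω) : E :=
  if (t : ℕ∞) < τ ω then u t ω else u (τ ω).toNat ω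

theorem enatStoppedProcess_add_one_sub [AddGroup E] (t : ℕ) :
    enatStoppedProcess u τ (t + 1) - enatStoppedProcess u τ t =
      {ω | (t : ℕ∞) < τ ω}.indicator (u (t + 1) - u t) := by
  ext ω
  simp only [enatStoppedProcess, Pi.sub_apply]
  by_cases h : (t : ℕ∞) < τ ω
  · rw [indicator_of_mem (show ω ∈ {ω | (t : ℕ∞) < τ ω} from h), if_pos h]
    by_cases h' : ((t + 1 : ℕ) : ℕ∞) < τ ω
    · rw [if_pos h', Pi.sub_apply]
    · have : τ ω = (t + 1 : ℕ) :=
        le_antisymm (not_lt.mp h') (by exact_mod_cast ENat.natCast_add_one_le_iff.mpr h)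
      rw [if_neg h', this, ENat.toNat_natCast, Pi.sub_apply]
  · have h' : ¬ ((t + 1 : ℕ) : ℕ∞) < τ ω := fun h' =>
      h ((Nat.cast_lt.mpr t.lt_succ_self).trans h')
    rw [indicator_of_notMem (show ω ∉ {ω | (t : ℕ∞) < τ ω} from h), if_neg h, if_neg h', sub_self]

end StoppedProcess

theorem setIntegral_le_sub_measureReal_of_condExp_le {Ω : Type*} {m m₀ : MeasurableSpace Ω}
    {μ : Measure Ω} [IsFiniteMeasure μ] (hm : m ≤ m₀) {f g : Ω → ℝ}
    (hf : Integrable f μ) (hg : Integrable g μ) {A L : Set Ω} (hA : MeasurableSet[m] A)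
    (hL : MeasurableSet L) (h_le : ∀ ω ∈ A, μ[g | m] ω ≤ f ω)
    (h_dec : ∀ ω ∈ L, μ[g | m] ω ≤ f ω - 1) :
    ∫ ω in A, g ω ∂μ ≤ ∫ ω in A, f ω ∂μ - μ.real (A ∩ L) := by
  have h_pointwise : ∀ ω ∈ A, μ[g | m] ω ≤ f ω - L.indicator (fun _ => 1) ω := by
    intro ω hω
    by_cases hωL : ω ∈ L
    · simpa [indicator_of_mem hωL] using h_dec ω hωL
    · simpa [indicator_of_notMem hωL] using h_le ω hω
  calc ∫ ω in A, g ω ∂μ = ∫ ω in A, μ[g | m] ω ∂μ := (setIntegral_condExp hm hg hA).symm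
    _ ≤ ∫ ω in A, (f ω - L.indicator (fun _ => 1) ω) ∂μ :=
      setIntegral_mono_on integrable_condExp.integrableOn
        (hf.sub ((integrable_const 1).indicator hL)).integrableOn (hm A hA) h_pointwise
    _ = ∫ ω in A, f ω ∂μ - μ.real (A ∩ L) := by
      rw [integral_sub hf.integrableOn ((integrable_const 1).indicator hL).integrableOn]
      simp [setIntegral_indicator hL]

theorem glexrsm_aux_process_expectation_decrease_general
    {Ω : Type*} {m : MeasurableSpace Ω} (μ : Measure Ω) [IsProbabilityMeasure μ]
    (ℱ : Filtration ℕ m) (T : Ω → ℕ∞)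
    {n : ℕ} (X : ℕ → Fin n → Ω → ℝ) (L : ℕ → Fin n → Set Ω)
    (hinst : IsGLexRSMInstance μ ℱ T X L)
    (k : Fin n) (s M : ℕ)
    (D : Set Ω) (hD : D = {ω | X s k ω ≤ (M : ℝ) ∧ ω ∈ ⋃ j ≥ k, L s j})
    (F : Ω → ℕ∞)
    (hF : ∀ ω, F ω = sInf {u : ℕ∞ | ∃ r : ℕ, u = (r : ℕ∞) ∧ s ≤ r ∧ ω ∉ ⋃ j' ≥ k, L r j'})
    (Y : ℕ → Ω → ℝ)
    (hY : ∀ t ω, Y t ω =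
      if ω ∈ D then
        (if t < s then (M : ℝ)
         else if (t : ℕ∞) < F ω then X t k ω
         else X (F ω).toNat k ω)
      else 0)
    (hYint : ∀ t, Integrable (Y t) μ) :
    ∀ t : ℕ, s ≤ t →
      ∫ ω, Y (t + 1) ω ∂μ ≤
        ∫ ω, Y t ω ∂μ - (μ (L t k ∩ D ∩ {ω | (t : ℕ∞) < F ω})).toReal := by
  obtain ⟨-, -, hLmeas, hXmeas, hXint, h_nonincr, h_decr, -, -⟩ := hinst
  intro t hst
  set B : ℕ → Set Ω := fun r => ⋃ j' ≥ k, L r j'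
  have hB (r : ℕ) : MeasurableSet[ℱ r] (B r) := .biUnion (to_countable _) fun j _ => hLmeas r j
  have hF_exit : F = exitTimeAfter B s := funext hF
  set A := D ∩ {ω | (t : ℕ∞) < F ω}
  have hA : MeasurableSet[ℱ t] A := by
    refine ℱ.mono hst _ ?_ |>.inter ?_
    · rw [hD]; exact (measurableSet_le (hXmeas s k).measurable measurable_const).inter (hB s)
    · rw [hF_exit]; exact measurableSet_natCast_lt_exitTimeAfter hB s t
  have hY_stopped : ∀ r, s ≤ r → Y r = D.indicator (enatStoppedProcess (fun i => X i k) F r) := by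
    intro r hr
    ext ω
    by_cases hω : ω ∈ D <;> simp [hY, hω, enatStoppedProcess, not_lt.mpr hr]
  have hY_incr : Y (t + 1) - Y t = A.indicator (X (t + 1) k - X t k) := by
    rw [hY_stopped _ (hst.trans t.le_succ), hY_stopped _ hst, ← indicator_sub',
      enatStoppedProcess_add_one_sub, indicator_indicator]
  have hAB : A ⊆ B t := fun ω hω => natCast_lt_exitTimeAfter_iff.mp (hF_exit ▸ hω.2) t hst le_rfl
  have h_decrease := setIntegral_le_sub_measureReal_of_condExp_le (ℱ.le t) (hXint t k)
    (hXint (t + 1) k) hA (ℱ.le t _ (hLmeas t k)) (fun ω hω => h_nonincr t k ω (hAB hω)) (h_decr t k)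
  have h_integral : ∫ ω, Y (t + 1) ω ∂μ - ∫ ω, Y t ω ∂μ =
      ∫ ω in A, X (t + 1) k ω ∂μ - ∫ ω in A, X t k ω ∂μ := by
    rw [← integral_sub (hYint _) (hYint _), ← integral_sub (hXint _ k).integrableOn
      (hXint t k).integrableOn, ← integral_indicator (ℱ.le t _ hA)]
    exact congrArg (fun f => ∫ ω, f ω ∂μ) hY_incr
  rw [show L t k ∩ D ∩ {ω | (t : ℕ∞) < F ω} = A ∩ L t k by
    simp only [A, inter_comm, inter_left_comm, inter_assoc], ← measureReal_def]
  linarith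

/-- For a GLexRSM instance, with `D = {X s k ≤ M} ∩ ⋃_{j ≥ k} L s j`,
`F ω = inf {t ≥ s | ω ∉ ⋃_{j' ≥ k} L t j'}`, and the auxiliary process `Y`,
for each `t ≥ s` we have `E[Y (t+1)] ≤ E[Y t] − P[L t k ∩ D ∩ {F > t}]`. -/
theorem glexrsm_aux_process_expectation_decrease
    {Ω : Type*} {m : MeasurableSpace Ω} (μ : Measure Ω) [IsProbabilityMeasure μ]
    (ℱ : Filtration ℕ m) (T : Ω → ℕ∞)
    (hT : ∀ t : ℕ, MeasurableSet[ℱ t] {ω | T ω ≤ (t : ℕ∞)})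
    {n : ℕ} (X : ℕ → Fin n → Ω → ℝ) (L : ℕ → Fin n → Set Ω)
    (hinst : IsGLexRSMInstance μ ℱ T X L)
    (k : Fin n) (s M : ℕ)
    (D : Set Ω) (hD : D = {ω | X s k ω ≤ (M : ℝ) ∧ ω ∈ ⋃ j ≥ k, L s j})
    (F : Ω → ℕ∞)
    (hF : ∀ ω, F ω = sInf {u : ℕ∞ | ∃ r : ℕ, u = (r : ℕ∞) ∧ s ≤ r ∧ ω ∉ ⋃ j' ≥ k, L r j'})
    (Y : ℕ → Ω → ℝ)
    (hY : ∀ t ω, Y t ω =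
      if ω ∈ D then
        (if t < s then (M : ℝ)
         else if (t : ℕ∞) < F ω then X t k ω
         else X (F ω).toNat k ω)
      else 0)
    (hYint : ∀ t, Integrable (Y t) μ) :
    ∀ t : ℕ, s ≤ t →
      ∫ ω, Y (t + 1) ω ∂μ ≤
        ∫ ω, Y t ω ∂μ - (μ (L t k ∩ D ∩ {ω | (t : ℕ∞) < F ω})).toReal :=
  glexrsm_aux_process_expectation_decrease_general μ ℱ T X L hinst k s M D hD F hF Y hY hYint
end

section
/- Let ((X_t)_{t≥0}, (L^t_1,…,L^t_n)_{t≥0}) be an instance of an n-dimensional GLexRSM for a stopping time T, fix 1 ≤ k ≤ n and s, M ∈ ℕ, and define D, F, and (Y_t)_{t≥0} as follows: D = {ω ∈ Ω | X_s[k](ω) ≤ M and ω ∈ ∪_{j=k}^n L^s_j}; F(ω) = inf{t ≥ s | ω ∉ ∪_{j'=k}^n L^t_{j'}}; Y_t(ω) = 0 if ω ∉ D, Y_t(ω) = M if ω ∈ D and t < s, Y_t(ω) = X_t[k](ω) if ω ∈ D, t ≥ s and F(ω) > t, and Y_t(ω) = X_{F(ω)}[k](ω) otherwise. Then for every t ≥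 s it holds that E[Y_s] ≥ E[Y_t] + Σ_{r=s}^{t−1} P[L^r_k ∩ D ∩ {F > r}]. -/
open MeasureTheory Set
open scoped Classical
open scoped ENNReal

/-! On `D`, the process `Y` is `X[k]` started at time `s` and stopped at the first time `F` at
which `ω` leaves `⋃_{j ≥ k} L^t_j`. Between `r` and `r + 1` it therefore only moves on the
`ℱ_r`-measurable event `G_r = D ∩ {F > r}`, by `X_{r+1}[k] - X_r[k]`, and on `G_r` conditions
(3a) and (3b) give `E[X_{r+1}[k] | ℱ_r] ≤ X_r[k] - 1_{L^r_k}`. Integrating over `G_r` yields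
`E[Y_{r+1}] + P[L^r_k ∩ G_r] ≤ E[Y_r]`, and these one-step bounds telescope. -/

lemma add_sum_Ico_le_of_forall_succ {α : Type*} [AddCommMonoid α] [PartialOrder α]
    [IsOrderedAddMonoid α] {a b : ℕ → α} {s : ℕ}
    (h : ∀ r, s ≤ r → a (r + 1) + b r ≤ a r) {t : ℕ} (ht : s ≤ t) :
    a t + ∑ r ∈ Finset.Ico s t, b r ≤ a s := by
  induction t, ht using Nat.le_induction with
  | base => simp
  | succ t ht ih =>
    calc a (t + 1) + ∑ r ∈ Finset.Ico s (t + 1), b r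
        = (a (t + 1) + b t) + ∑ r ∈ Finset.Ico s t, b r := by
          rw [Finset.sum_Ico_succ_top ht, add_comm _ (b t), add_assoc]
      _ ≤ a t + ∑ r ∈ Finset.Ico s t, b r := by gcongr; exact h t ht
      _ ≤ a s := ih

lemma natCast_lt_sInf_iff {p : ℕ → Prop} {r : ℕ} :
    (r : ℕ∞) < sInf {u : ℕ∞ | ∃ r' : ℕ, u = r' ∧ p r'} ↔ ∀ r' ≤ r, ¬ p r' := by
  constructor
  · rintro h r' hr' hp
    have : (r : ℕ∞) < r' := h.trans_le (sInf_le (show (r' : ℕ∞) ∈ _ from ⟨r', rfl, hp⟩))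
    exact absurd hr' (not_le.mpr (by exact_mod_cast this))
  · intro h
    calc (r : ℕ∞) < (r + 1 : ℕ) := by exact_mod_cast r.lt_succ_self
      _ ≤ _ := by
        refine le_sInf ?_
        rintro u ⟨r', rfl, hp⟩
        exact_mod_cast Nat.succ_le_of_lt (not_le.mp fun hr' => h r' hr' hp)

section ExitTime

variable {Ω : Type*}

/-- The first time `r ≥ s` with `ω ∉ U r`, or `⊤` if there is none. -/
noncomputable def exitTimeFrom (s : ℕ) (U : ℕ → Set Ω) (ω : Ω) : ℕ∞ :=
  sInf {u : ℕ∞ | ∃ r : ℕ, u = r ∧ s ≤ r ∧ ω ∉ U r}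

variable {s : ℕ} {U : ℕ → Set Ω}

lemma natCast_lt_exitTimeFrom_iff {r : ℕ} {ω : Ω} :
    (r : ℕ∞) < exitTimeFrom s U ω ↔ ∀ r', s ≤ r' → r' ≤ r → ω ∈ U r' := by
  simp only [exitTimeFrom, natCast_lt_sInf_iff (p := fun r' => s ≤ r' ∧ ω ∉ U r'), not_and,
    not_not]
  exact forall_congr' fun r' => ⟨fun h hs hr => h hr hs, fun h hr hs => h hs hr⟩

lemma mem_of_natCast_lt_exitTimeFrom {r : ℕ} {ω : Ω} (hr : s ≤ r)
    (h : (r : ℕ∞) < exitTimeFrom s U ω) : ω ∈ U r :=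
  natCast_lt_exitTimeFrom_iff.mp h r hr le_rfl

lemma measurableSet_natCast_lt_exitTimeFrom {m : MeasurableSpace Ω} {ℱ : Filtration ℕ m}
    (hU : ∀ r, MeasurableSet[ℱ r] (U r)) (r : ℕ) :
    MeasurableSet[ℱ r] {ω | (r : ℕ∞) < exitTimeFrom s U ω} := by
  have : {ω | (r : ℕ∞) < exitTimeFrom s U ω} = ⋂ r' ∈ Icc s r, U r' := by
    ext ω
    simp only [mem_ofPred_eq, natCast_lt_exitTimeFrom_iff, mem_iInter, mem_Icc, and_imp]
  rw [this]
  exact .biInter (to_countable _) fun r' hr' => ℱ.mono hr'.2 _ (hU r')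

end ExitTime

section StoppedProcess

variable {Ω : Type*}

noncomputable def stoppedProcessFrom (D : Set Ω) (s : ℕ) (c : ℝ) (Z : ℕ → Ω → ℝ)
    (τ : Ω → ℕ∞) (t : ℕ) (ω : Ω) : ℝ :=
  if ω ∈ D then
    (if t < s then c else if (t : ℕ∞) < τ ω then Z t ω else Z (τ ω).toNat ω)
  else 0

variable {D : Set Ω} {s r : ℕ} {c : ℝ} {Z : ℕ → Ω → ℝ} {τ : Ω → ℕ∞}

lemma stoppedProcessFrom_succ (hr : s ≤ r) (ω : Ω) :
    stoppedProcessFrom D s c Z τ (r + 1) ω =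
      stoppedProcessFrom D s c Z τ r ω +
        (D ∩ {ω | (r : ℕ∞) < τ ω}).indicator (Z (r + 1) - Z r) ω := by
  have hr₁ : ¬ r + 1 < s := by omega
  by_cases hD : ω ∈ D
  swap
  · simp [stoppedProcessFrom, hD]
  by_cases hτ : (r : ℕ∞) < τ ω
  · have hG : ω ∈ D ∩ {ω | (r : ℕ∞) < τ ω} := ⟨hD, hτ⟩
    simp only [stoppedProcessFrom, if_pos hD, if_neg hr₁, if_neg (not_lt.mpr hr), if_pos hτ,
      indicator_of_mem hG, Pi.sub_apply]
    split_ifs with hτ₁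
    · ring
    · have : τ ω = (r + 1 : ℕ) :=
        le_antisymm (not_lt.mp hτ₁) (by exact_mod_cast Order.add_one_le_of_lt hτ)
      rw [this, ENat.toNat_natCast]
      ring
  · have hτ₁ : ¬ ((r + 1 : ℕ) : ℕ∞) < τ ω :=
      fun h => hτ (lt_trans (by exact_mod_cast r.lt_succ_self) h)
    have hG : ω ∉ D ∩ {ω | (r : ℕ∞) < τ ω} := fun h => hτ h.2
    simp only [stoppedProcessFrom, if_pos hD, if_neg hr₁, if_neg (not_lt.mpr hr), if_neg hτ,
      if_neg hτ₁, indicator_of_notMem hG, add_zero]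

lemma integral_stoppedProcessFrom_succ {m : MeasurableSpace Ω} {μ : Measure Ω} (hr : s ≤ r)
    (hV : Integrable (stoppedProcessFrom D s c Z τ r) μ) (hZr : Integrable (Z r) μ)
    (hZr₁ : Integrable (Z (r + 1)) μ) (hG : MeasurableSet (D ∩ {ω | (r : ℕ∞) < τ ω})) :
    ∫ ω, stoppedProcessFrom D s c Z τ (r + 1) ω ∂μ =
      ∫ ω, stoppedProcessFrom D s c Z τ r ω ∂μ +
        (∫ ω in D ∩ {ω | (r : ℕ∞) < τ ω}, Z (r + 1) ω ∂μ -
          ∫ ω in D ∩ {ω | (r : ℕ∞) < τ ω}, Z r ω ∂μ) := by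
  simp_rw [stoppedProcessFrom_succ hr]
  rw [integral_add hV ((hZr₁.sub hZr).indicator hG), integral_indicator hG]
  exact congrArg _ (integral_sub hZr₁.integrableOn hZr.integrableOn)

end StoppedProcess

lemma setIntegral_add_measureReal_inter_le_of_condExp_le {Ω : Type*} {m₀ m : MeasurableSpace Ω}
    {μ : Measure Ω} [IsFiniteMeasure μ] (hm : m₀ ≤ m) {f g : Ω → ℝ} {G A : Set Ω}
    (hG : MeasurableSet[m₀] G) (hA : MeasurableSet A) (hf : Integrable f μ)
    (hg : Integrable g μ) (hle : ∀ ω ∈ G, μ[g | m₀] ω ≤ f ω - A.indicator 1 ω) :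
    ∫ ω in G, g ω ∂μ + μ.real (A ∩ G) ≤ ∫ ω in G, f ω ∂μ := by
  have hA₁ : Integrable (A.indicator (1 : Ω → ℝ)) μ := (integrable_const 1).indicator hA
  have hmono : ∫ ω in G, μ[g | m₀] ω ∂μ ≤ ∫ ω in G, (f ω - A.indicator 1 ω) ∂μ :=
    setIntegral_mono_on integrable_condExp.integrableOn (hf.sub hA₁).integrableOn (hm G hG) hle
  have hA_G : ∫ ω in G, A.indicator (1 : Ω → ℝ) ω ∂μ = μ.real (A ∩ G) := by
    rw [integral_indicator_one hA, measureReal_restrict_apply hA]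
  rw [setIntegral_condExp hm hg hG, integral_sub hf.integrableOn hA₁.integrableOn, hA_G] at hmono
  linarith

lemma IsGLexRSMInstance.condExp_le_sub_indicator {Ω : Type*} {m : MeasurableSpace Ω}
    {μ : Measure Ω} {ℱ : Filtration ℕ m} {T : Ω → ℕ∞} {n : ℕ} {X : ℕ → Fin n → Ω → ℝ}
    {L : ℕ → Fin n → Set Ω} (h : IsGLexRSMInstance μ ℱ T X L) {t : ℕ} {j : Fin n} {ω : Ω}
    (hω : ω ∈ ⋃ j' ≥ j, L t j') :
    μ[X (t + 1) j | ℱ t] ω ≤ X t j ω - (L t j).indicator 1 ω := by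
  obtain ⟨-, -, -, -, -, hdec, hdec₁, -, -⟩ := h
  by_cases hL : ω ∈ L t j
  · simpa only [indicator_of_mem hL, Pi.one_apply] using hdec₁ t j ω hL
  · simpa only [indicator_of_notMem hL, sub_zero] using hdec t j ω hω

theorem glexrsm_aux_process_expectation_sum_bound_general
    {Ω : Type*} {m : MeasurableSpace Ω} (μ : Measure Ω) [IsProbabilityMeasure μ]
    (ℱ : Filtration ℕ m) (T : Ω → ℕ∞)
    {n : ℕ} (X : ℕ → Fin n → Ω → ℝ) (L : ℕ → Fin n → Set Ω)
    (hinst : IsGLexRSMInstance μ ℱ T X L)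
    (k : Fin n) (s M : ℕ)
    (D : Set Ω) (hD : D = {ω | X s k ω ≤ (M : ℝ) ∧ ω ∈ ⋃ j ≥ k, L s j})
    (F : Ω → ℕ∞)
    (hF : ∀ ω, F ω = sInf {u : ℕ∞ | ∃ r : ℕ, u = (r : ℕ∞) ∧ s ≤ r ∧ ω ∉ ⋃ j' ≥ k, L r j'})
    (Y : ℕ → Ω → ℝ)
    (hY : ∀ t ω, Y t ω =
      if ω ∈ D then
        (if t < s then (M : ℝ)
         else if (t : ℕ∞) < F ω then X t k ω
         else X (F ω).toNat k ω)
      else 0)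
    (hYint : ∀ t, Integrable (Y t) μ) :
    ∀ t : ℕ, s ≤ t →
      ∫ ω, Y t ω ∂μ +
          ∑ r ∈ Finset.Ico s t, (μ (L r k ∩ D ∩ {ω | (r : ℕ∞) < F ω})).toReal ≤
        ∫ ω, Y s ω ∂μ := by
  obtain ⟨-, -, hL, hXmeas, hX, -⟩ := id hinst
  set U : ℕ → Set Ω := fun r => ⋃ j ≥ k, L r j
  have hU : ∀ r, MeasurableSet[ℱ r] (U r) := fun r => .iUnion fun j => .iUnion fun _ => hL r j
  have hDmeas : MeasurableSet[ℱ s] D := by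
    rw [hD]
    exact ((hXmeas s k).measurable measurableSet_Iic).inter (hU s)
  refine fun t ht => add_sum_Ico_le_of_forall_succ (a := fun t => ∫ ω, Y t ω ∂μ)
    (fun r hr => ?_) ht
  obtain rfl : F = exitTimeFrom s U := funext hF
  obtain rfl : Y = stoppedProcessFrom D s M (fun t => X t k) (exitTimeFrom s U) :=
    funext fun t => funext (hY t)
  have hG : MeasurableSet[ℱ r] (D ∩ {ω | (r : ℕ∞) < exitTimeFrom s U ω}) :=
    (ℱ.mono hr _ hDmeas).inter (measurableSet_natCast_lt_exitTimeFrom hU r)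
  have hstep := setIntegral_add_measureReal_inter_le_of_condExp_le (ℱ.le r) hG
    (ℱ.le r _ (hL r k)) (hX r k) (hX (r + 1) k)
    fun ω hω => hinst.condExp_le_sub_indicator (mem_of_natCast_lt_exitTimeFrom hr hω.2)
  rw [integral_stoppedProcessFrom_succ hr (hYint r) (hX r k) (hX (r + 1) k) (ℱ.le r _ hG),
    inter_assoc]
  rw [measureReal_def] at hstep
  linarith

/-- For a GLexRSM instance with the auxiliary data `D`, `F`, `Y`, for every `t ≥ s`:
`E[Y s] ≥ E[Y t] + Σ_{r=s}^{t−1} P[L r k ∩ D ∩ {F > r}]`. -/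
theorem glexrsm_aux_process_expectation_sum_bound
    {Ω : Type*} {m : MeasurableSpace Ω} (μ : Measure Ω) [IsProbabilityMeasure μ]
    (ℱ : Filtration ℕ m) (T : Ω → ℕ∞)
    (hT : ∀ t : ℕ, MeasurableSet[ℱ t] {ω | T ω ≤ (t : ℕ∞)})
    {n : ℕ} (X : ℕ → Fin n → Ω → ℝ) (L : ℕ → Fin n → Set Ω)
    (hinst : IsGLexRSMInstance μ ℱ T X L)
    (k : Fin n) (s M : ℕ)
    (D : Set Ω) (hD : D = {ω | X s k ω ≤ (M : ℝ) ∧ ω ∈ ⋃ j ≥ k, L s j})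
    (F : Ω → ℕ∞)
    (hF : ∀ ω, F ω = sInf {u : ℕ∞ | ∃ r : ℕ, u = (r : ℕ∞) ∧ s ≤ r ∧ ω ∉ ⋃ j' ≥ k, L r j'})
    (Y : ℕ → Ω → ℝ)
    (hY : ∀ t ω, Y t ω =
      if ω ∈ D then
        (if t < s then (M : ℝ)
         else if (t : ℕ∞) < F ω then X t k ω
         else X (F ω).toNat k ω)
      else 0)
    (hYint : ∀ t, Integrable (Y t) μ) :
    ∀ t : ℕ, s ≤ t →
      ∫ ω, Y t ω ∂μ +
          ∑ r ∈ Finset.Ico s t, (μ (L r k ∩ D ∩ {ω | (r : ℕ∞) < F ω})).toReal ≤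
        ∫ ω, Y s ω ∂μ :=
  glexrsm_aux_process_expectation_sum_bound_general μ ℱ T X L hinst k s M D hD F hF Y hY hYint
end

section
/- Let ((X_t)_{t≥0}, (L^t_1,…,L^t_n)_{t≥0}) be an instance of an n-dimensional GLexRSM for a stopping time T, fix 1 ≤ k ≤ n and s, M ∈ ℕ, and define D, F, and (Y_t)_{t≥0} as follows: D = {ω ∈ Ω | X_s[k](ω) ≤ M and ω ∈ ∪_{j=k}^n L^s_j}; F(ω) = inf{t ≥ s | ω ∉ ∪_{j'=k}^n L^t_{j'}}; Y_t(ω) = 0 if ω ∉ D, Y_t(ω) = M if ω ∈ D and t < s, Y_t(ω) = X_t[k](ω) if ω ∈ D, t ≥ s and F(ω) > t, and Y_t(ω) = X_{F(ω)}[k](ω) otherwise. Then E[Y_t] ≥ 0 for every t ≥ 0. -/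
open MeasureTheory Set
open scoped Classical
open scoped ENNReal

/-- For a GLexRSM instance with the auxiliary data `D`, `F`, `Y`,
the expectation of `Y t` is non-negative for every `t`. -/
theorem glexrsm_aux_process_expectation_nonneg
    {Ω : Type*} {m : MeasurableSpace Ω} (μ : Measure Ω) [IsProbabilityMeasure μ]
    (ℱ : Filtration ℕ m) (T : Ω → ℕ∞)
    (hT : ∀ t : ℕ, MeasurableSet[ℱ t] {ω | T ω ≤ (t : ℕ∞)})
    {n : ℕ} (X : ℕ → Fin n → Ω → ℝ) (L : ℕ → Fin n → Set Ω)
    (hinst : IsGLexRSMInstance μ ℱ T X L)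
    (k : Fin n) (s M : ℕ)
    (D : Set Ω) (hD : D = {ω | X s k ω ≤ (M : ℝ) ∧ ω ∈ ⋃ j ≥ k, L s j})
    (F : Ω → ℕ∞)
    (hF : ∀ ω, F ω = sInf {u : ℕ∞ | ∃ r : ℕ, u = (r : ℕ∞) ∧ s ≤ r ∧ ω ∉ ⋃ j' ≥ k, L r j'})
    (Y : ℕ → Ω → ℝ)
    (hY : ∀ t ω, Y t ω =
      if ω ∈ D then
        (if t < s then (M : ℝ)
         else if (t : ℕ∞) < F ω then X t k ω
         else X (F ω).toNat k ω)
      else 0)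
    (hYint : ∀ t, Integrable (Y t) μ) :
    ∀ t : ℕ, 0 ≤ ∫ ω, Y t ω ∂μ := by
  obtain ⟨hpart, hdisj, hLmeas, hXmeas, hXint, h3a, h3b, h3c, h3d⟩ := hinst
  set G : ℕ → Set Ω := fun r => ⋃ j' ≥ k, L r j' with hGdef
  -- measurability
  have hGmeas : ∀ r, MeasurableSet[ℱ r] (G r) :=
    fun r => MeasurableSet.biUnion (to_countable _) fun j _ => hLmeas r j
  have hDsub : D ⊆ G s := by intro ω hω; rw [hD] at hω; exact hω.2
  have hDmeas : MeasurableSet[ℱ s] D := by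
    have : D = (X s k) ⁻¹' (Set.Iic (M : ℝ)) ∩ G s := by
      rw [hD]; ext ω
      simp only [Set.mem_setOf_eq, Set.mem_inter_iff, Set.mem_preimage, Set.mem_Iic, hGdef]
    rw [this]
    exact ((hXmeas s k).measurable measurableSet_Iic).inter (hGmeas s)
  -- characterization of F
  have hFlt : ∀ (ω) (t : ℕ), (t : ℕ∞) < F ω ↔ ∀ r : ℕ, s ≤ r → r ≤ t → ω ∈ G r := by
    intro ω t
    rw [hF]
    constructor
    · intro h r hsr hrt
      by_contra hω
      have hmem : (r : ℕ∞) ∈ {u : ℕ∞ | ∃ r : ℕ, u = (r : ℕ∞) ∧ s ≤ r ∧ ω ∉ G r} :=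
        ⟨r, rfl, hsr, hω⟩
      have h1 : sInf {u : ℕ∞ | ∃ r : ℕ, u = (r : ℕ∞) ∧ s ≤ r ∧ ω ∉ G r} ≤ (r : ℕ∞) :=
        sInf_le hmem
      exact absurd (Nat.cast_lt.mp (h.trans_le h1)) (not_lt.mpr hrt)
    · intro h
      have h1 : (((t + 1 : ℕ)) : ℕ∞) ≤ sInf {u : ℕ∞ | ∃ r : ℕ, u = (r : ℕ∞) ∧ s ≤ r ∧ ω ∉ G r} := by
        refine le_sInf fun u hu => ?_
        obtain ⟨r, rfl, hsr, hω⟩ := hu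
        have hrt : t < r := by
          by_contra hle
          exact hω (h r hsr (not_lt.mp hle))
        exact_mod_cast Nat.succ_le_of_lt hrt
      calc (t : ℕ∞) < ((t + 1 : ℕ) : ℕ∞) := by exact_mod_cast Nat.lt_succ_self t
        _ ≤ _ := h1
  have hFeq : ∀ (ω) (r0 : ℕ), s ≤ r0 → ω ∉ G r0 → (∀ u : ℕ, s ≤ u → u < r0 → ω ∈ G u) →
      F ω = (r0 : ℕ∞) := by
    intro ω r0 hs0 hω0 hmin
    rw [hF]
    refine le_antisymm (sInf_le ⟨r0, rfl, hs0, hω0⟩) (le_sInf fun u hu => ?_)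
    obtain ⟨r, rfl, hsr, hω⟩ := hu
    have : ¬ r < r0 := fun hlt => hω (hmin r hsr hlt)
    exact_mod_cast not_lt.mp this
  have hFfin : ∀ (ω) (t : ℕ), ω ∈ D → s ≤ t → ¬((t : ℕ∞) < F ω) →
      ∃ r0 : ℕ, F ω = (r0 : ℕ∞) ∧ s + 1 ≤ r0 ∧ r0 ≤ t ∧ ω ∉ G r0 ∧
        (∀ u : ℕ, s ≤ u → u < r0 → ω ∈ G u) := by
    intro ω t hωD hst hnlt
    have hex : ∃ r : ℕ, s ≤ r ∧ ω ∉ G r := by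
      rw [hFlt] at hnlt
      push_neg at hnlt
      obtain ⟨r, h1, h2, h3⟩ := hnlt
      exact ⟨r, h1, h3⟩
    have h0 := Nat.find_spec hex
    have hmin : ∀ u : ℕ, s ≤ u → u < Nat.find hex → ω ∈ G u := by
      intro u hsu hur
      by_contra hω
      exact (Nat.find_min hex hur) ⟨hsu, hω⟩
    have hFr : F ω = (Nat.find hex : ℕ∞) := hFeq ω _ h0.1 h0.2 hmin
    have hs1 : s + 1 ≤ Nat.find hex :=
      Nat.succ_le_of_lt (lt_of_le_of_ne h0.1 (fun h => h0.2 (h ▸ hDsub hωD)))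
    have hr0t : Nat.find hex ≤ t := Nat.cast_le.mp (hFr ▸ not_lt.mp hnlt)
    exact ⟨Nat.find hex, hFr, hs1, hr0t, h0.2, hmin⟩
  -- the sets of the decomposition
  set A : ℕ → Set Ω := fun t => D ∩ ⋂ u ∈ Finset.Icc s t, G u with hAdef
  set C : ℕ → Set Ω := fun r => D ∩ ⋂ u ∈ Finset.Icc s (r - 1), G u with hCdef
  set B : ℕ → Set Ω := fun r => C r ∩ (G r)ᶜ with hBdef
  have hAmem : ∀ (t : ℕ), s ≤ t → ∀ ω, ω ∈ A t ↔ ω ∈ D ∧ (t : ℕ∞) < F ω := by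
    intro t hst ω
    simp only [hAdef, Set.mem_inter_iff, Set.mem_iInter, Finset.mem_Icc]
    rw [hFlt ω t]
    constructor
    · rintro ⟨h1, h2⟩; exact ⟨h1, fun r hsr hrt => h2 r ⟨hsr, hrt⟩⟩
    · rintro ⟨h1, h2⟩; exact ⟨h1, fun r hr => h2 r hr.1 hr.2⟩
  have hBmem : ∀ (r : ℕ), s + 1 ≤ r → ∀ ω, ω ∈ B r ↔ ω ∈ D ∧ F ω = (r : ℕ∞) := by
    intro r hsr ω
    simp only [hBdef, hCdef, Set.mem_inter_iff, Set.mem_iInter, Finset.mem_Icc,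
      Set.mem_compl_iff]
    constructor
    · rintro ⟨⟨h1, h2⟩, h3⟩
      refine ⟨h1, hFeq ω r (le_trans (Nat.le_succ s) hsr) h3 ?_⟩
      intro u hsu hur
      exact h2 u ⟨hsu, Nat.le_sub_one_of_lt hur⟩
    · rintro ⟨h1, h2⟩
      have hnlt : ¬ ((r : ℕ∞) ≤ (r : ℕ∞)) → False := fun h => h le_rfl
      have h3 : ω ∉ G r := by
        intro hω
        have : (r : ℕ∞) < F ω := by
          rw [hFlt]
          intro u hsu hur
          rcases Nat.lt_or_ge u r with h | h
          · -- u < r : F ω = r means sInf ≤ u would contradict; use minimality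
            by_contra hωu
            have : F ω ≤ (u : ℕ∞) := by rw [hF]; exact sInf_le ⟨u, rfl, hsu, hωu⟩
            rw [h2] at this
            exact absurd (Nat.cast_le.mp this) (not_le.mpr h)
          · have : u = r := le_antisymm hur h
            exact this ▸ hω
        rw [h2] at this
        exact absurd this (lt_irrefl _)
      refine ⟨⟨h1, ?_⟩, h3⟩
      intro u hu
      by_contra hωu
      have : F ω ≤ (u : ℕ∞) := by rw [hF]; exact sInf_le ⟨u, rfl, hu.1, hωu⟩
      rw [h2] at this
      have hur : u < r := Nat.lt_of_le_of_lt hu.2 (Nat.sub_lt (Nat.lt_of_lt_of_le (Nat.succ_pos s) hsr) Nat.one_pos)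
      exact absurd (Nat.cast_le.mp this) (not_le.mpr hur)
  -- pointwise decomposition of Y t for s ≤ t
  have hdecomp : ∀ (t : ℕ), s ≤ t → ∀ ω, Y t ω =
      (A t).indicator (X t k) ω + ∑ r ∈ Finset.Icc (s + 1) t, (B r).indicator (X r k) ω := by
    intro t hst ω
    rw [hY t ω]
    by_cases hωD : ω ∈ D
    · rw [if_pos hωD, if_neg (not_lt.mpr hst)]
      by_cases hlt : (t : ℕ∞) < F ω
      · rw [if_pos hlt]
        have hA : ω ∈ A t := (hAmem t hst ω).mpr ⟨hωD, hlt⟩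
        have hB : ∀ r ∈ Finset.Icc (s + 1) t, (B r).indicator (X r k) ω = 0 := by
          intro r hr
          rw [Finset.mem_Icc] at hr
          apply Set.indicator_of_notMem
          intro hωB
          have := ((hBmem r hr.1 ω).mp hωB).2
          rw [this] at hlt
          exact absurd (Nat.cast_lt.mp hlt) (not_lt.mpr hr.2)
        rw [Set.indicator_of_mem hA, Finset.sum_eq_zero hB, add_zero]
      · rw [if_neg hlt]
        obtain ⟨r0, hFr, hs1, hr0t, hω0, hmin⟩ := hFfin ω t hωD hst hlt
        have hA : ω ∉ A t := by
          rw [hAmem t hst ω]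
          rintro ⟨-, h⟩
          rw [hFr] at h
          exact absurd (Nat.cast_lt.mp h) (not_lt.mpr hr0t)
        have htn : (F ω).toNat = r0 := by rw [hFr]; simp
        rw [Set.indicator_of_notMem hA, zero_add, htn]
        rw [Finset.sum_eq_single_of_mem r0 (Finset.mem_Icc.mpr ⟨hs1, hr0t⟩)]
        · exact (Set.indicator_of_mem ((hBmem r0 hs1 ω).mpr ⟨hωD, hFr⟩) _).symm
        · intro r hr hne
          rw [Finset.mem_Icc] at hr
          apply Set.indicator_of_notMem
          intro hωB
          have := ((hBmem r hr.1 ω).mp hωB).2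
          rw [hFr] at this
          exact hne (Nat.cast_inj.mp this).symm
    · rw [if_neg hωD]
      have hA : ω ∉ A t := fun h => hωD (((hAmem t hst ω).mp h).1)
      have hB : ∀ r ∈ Finset.Icc (s + 1) t, (B r).indicator (X r k) ω = 0 := by
        intro r hr
        rw [Finset.mem_Icc] at hr
        exact Set.indicator_of_notMem (fun h => hωD (((hBmem r hr.1 ω).mp h).1)) _
      rw [Set.indicator_of_notMem hA, Finset.sum_eq_zero hB, add_zero]
  -- complement of G r
  have hGE : ∀ r : ℕ, (G r)ᶜ = {ω' | T ω' ≤ (r : ℕ∞)} ∪ ⋃ j' < k, L r j' := by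
    intro r
    ext ω
    simp only [Set.mem_compl_iff, Set.mem_union, Set.mem_setOf_eq]
    constructor
    · intro h
      by_cases hTr : T ω ≤ (r : ℕ∞)
      · exact Or.inl hTr
      · have hmem : ω ∈ ⋃ j, L r j := by
          rw [hpart r]; exact not_le.mp hTr
        obtain ⟨j, hj⟩ := Set.mem_iUnion.mp hmem
        rcases lt_or_ge j k with hjk | hjk
        · exact Or.inr (Set.mem_iUnion₂.mpr ⟨j, hjk, hj⟩)
        · exact absurd (Set.mem_iUnion₂.mpr ⟨j, hjk, hj⟩) h
    · intro h hG
      obtain ⟨j, hjk, hj⟩ := Set.mem_iUnion₂.mp hG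
      rcases h with hTr | hL
      · have hmem : ω ∈ ⋃ j, L r j := Set.mem_iUnion.mpr ⟨j, hj⟩
        rw [hpart r] at hmem
        exact absurd hTr (not_le.mpr hmem)
      · obtain ⟨j', hj'k, hj'⟩ := Set.mem_iUnion₂.mp hL
        have hne : j ≠ j' := fun h => (not_lt.mpr hjk) (h ▸ hj'k)
        exact Set.disjoint_left.mp (hdisj r j j' hne) hj hj'
  -- measurability in m
  have hAm : ∀ t : ℕ, MeasurableSet (A t) := by
    intro t
    exact (ℱ.le s _ hDmeas).inter (MeasurableSet.biInter (Finset.Icc s t).countable_toSet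
      (fun u _ => ℱ.le u _ (hGmeas u)))
  have hCm : ∀ r : ℕ, MeasurableSet (C r) := by
    intro r
    exact (ℱ.le s _ hDmeas).inter (MeasurableSet.biInter (Finset.Icc s (r - 1)).countable_toSet
      (fun u _ => ℱ.le u _ (hGmeas u)))
  have hBm : ∀ r : ℕ, MeasurableSet (B r) :=
    fun r => (hCm r).inter (ℱ.le r _ (hGmeas r)).compl
  have hCmF : ∀ u : ℕ, s ≤ u → MeasurableSet[ℱ u] (C (u + 1)) := by
    intro u hsu
    refine (ℱ.mono hsu _ hDmeas).inter ?_
    refine MeasurableSet.biInter (Finset.Icc s (u + 1 - 1)).countable_toSet fun v hv => ?_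
    have hvu : v ≤ u := by
      have := (Finset.mem_Icc.mp (Finset.mem_coe.mp hv)).2
      simpa using this
    exact ℱ.mono hvu _ (hGmeas v)
  -- final computation
  intro t
  rcases lt_or_ge t s with hts | hst
  · refine integral_nonneg fun ω => ?_
    rw [hY t ω]
    by_cases hωD : ω ∈ D
    · rw [if_pos hωD, if_pos hts]; exact Nat.cast_nonneg M
    · rw [if_neg hωD]; simp
  · simp only [hdecomp t hst]
    have hintA : Integrable ((A t).indicator (X t k)) μ := (hXint t k).indicator (hAm t)
    have hintB : ∀ r ∈ Finset.Icc (s + 1) t, Integrable ((B r).indicator (X r k)) μ :=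
      fun r _ => (hXint r k).indicator (hBm r)
    rw [integral_add hintA (integrable_finset_sum _ hintB), integral_finset_sum _ hintB]
    refine add_nonneg ?_ (Finset.sum_nonneg fun r hr => ?_)
    · rw [integral_indicator (hAm t)]
      refine setIntegral_nonneg (hAm t) fun ω hω => ?_
      refine h3c t k ω ?_
      exact Set.mem_iInter₂.mp hω.2 t (Finset.mem_Icc.mpr ⟨hst, le_rfl⟩)
    · obtain ⟨hs1, hrt⟩ := Finset.mem_Icc.mp hr
      obtain ⟨u, rfl⟩ : ∃ u, r = u + 1 :=
        ⟨r - 1, (Nat.succ_pred_eq_of_pos (Nat.lt_of_lt_of_le (Nat.succ_pos s) hs1)).symm⟩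
      have hsu : s ≤ u := Nat.lt_succ_iff.mp (Nat.lt_of_succ_le hs1)
      have hEmeas : MeasurableSet ({ω' | T ω' ≤ ((u + 1 : ℕ) : ℕ∞)} ∪ ⋃ j' < k, L (u + 1) j') := by
        rw [← hGE (u + 1)]
        exact (ℱ.le (u + 1) _ (hGmeas (u + 1))).compl
      have hintE : Integrable
          (Set.indicator ({ω' | T ω' ≤ ((u + 1 : ℕ) : ℕ∞)} ∪ ⋃ j' < k, L (u + 1) j')
            (X (u + 1) k)) μ := (hXint (u + 1) k).indicator hEmeas
      have hBE : B (u + 1) = C (u + 1) ∩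
          ({ω' | T ω' ≤ ((u + 1 : ℕ) : ℕ∞)} ∪ ⋃ j' < k, L (u + 1) j') := by
        rw [hBdef, ← hGE (u + 1)]
      rw [hBE, ← Set.indicator_indicator, integral_indicator (hCm (u + 1)),
        ← setIntegral_condExp (ℱ.le u) hintE (hCmF u hsu)]
      refine setIntegral_nonneg (hCm (u + 1)) fun ω hω => ?_
      refine h3d u k ω ?_
      exact Set.mem_iInter₂.mp hω.2 u (Finset.mem_Icc.mpr ⟨hsu, by simp⟩)
end

section
/- The expected leftward non-negativity condition cannot be dropped from the definition of a GLexRSM: there exist a probability space (Ω,F,P), a filtration (F_t)_{t≥0}, a stopping time T with respect to (F_t), a one-dimensional stochastic process (Y_t)_{t≥0}, and F_t-measurable sets L^t_1 = {T > t} such that ((Y_t)_{t≥0}, (L^t_1)_{t≥0}) satisfies all conditions of a GLexRSM for T except the expected leftward non-negativity condition (condition 3(d)), and yet P[T < ∞] < 1. A witnessing construction is: Y_0 = 1 with probability 1; at each step t, if Y_t ≥ 0 then with probability p_t = (1/4)·2^{-t} set Y_{t+1} = Y_t − 2/p_t and with probability 1 − p_t set Y_{t+1} = Y_t + 1/(1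 − p_t); if Y_t < 0 set Y_{t+1} = Y_t; and T is the first time t with Y_t < 0. -/
open MeasureTheory Set
open scoped ENNReal

/-!
Let `T` be a random time with `P(T = ∞) > 0` and `P(T = n) > 0` for every `n`, observed through
the filtration that at time `t` reveals `T` if `T ≤ t` and otherwise only that `T > t`. Put
`Y t = 0` on `{T > t}` and `Y t = -P(T ≥ t) / P(T = t)` on `{T ≤ t}`. On `{T > t}` the rare
event `T = t + 1` costs exactly `P(T > t)` in expectation, so `E[Y (t+1) | ℱ t] = -1 = Y t - 1`
there, and `Y` is nonnegative while `T` is running. Nevertheless `T = ∞` with positive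
probability; what fails is the expected leftward non-negativity, since
`E[Y (t+1) · 1_{T ≤ t+1} | ℱ t] = -1` on `{T > t}`.
-/

lemma exists_isProbabilityMeasure_forall_measure_singleton_ne_zero (α : Type*)
    [MeasurableSpace α] [MeasurableSingletonClass α] [Countable α] [Nonempty α] :
    ∃ μ : Measure α, IsProbabilityMeasure μ ∧ ∀ x, μ {x} ≠ 0 := by
  obtain ⟨e, he⟩ := exists_surjective_nat α
  let p : unitInterval := ⟨1 / 2, by norm_num, by norm_num⟩
  have hp : p ≠ 0 := fun h => by simpa [p] using congrArg Subtype.val h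
  have hp' : p ≠ 1 := fun h => by simpa [p] using congrArg Subtype.val h
  refine ⟨(ProbabilityTheory.geometricMeasure p).map e,
    Measure.isProbabilityMeasure_map (measurable_from_nat).aemeasurable, fun x => ?_⟩
  obtain ⟨n, rfl⟩ := he x
  rw [Measure.map_apply measurable_from_nat (measurableSet_singleton _)]
  have hsub : {n} ⊆ e ⁻¹' {e n} := singleton_subset_iff.2 rfl
  refine (lt_of_lt_of_le ?_ (measure_mono hsub)).ne'
  rw [ProbabilityTheory.geometricMeasure_singleton hp, ENNReal.ofReal_pos]
  exact ProbabilityTheory.geometricMeasure_pos hp hp' n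

lemma MeasurableSpace.subset_or_disjoint_of_measurableSet_comap {α β : Type*}
    {m : MeasurableSpace β} {f : α → β} {A : Set α} (hA : MeasurableSet[m.comap f] A) (b : β) :
    f ⁻¹' {b} ⊆ A ∨ Disjoint (f ⁻¹' {b}) A := by
  obtain ⟨B, -, rfl⟩ := hA
  by_cases hb : b ∈ B
  · exact .inl (preimage_mono (singleton_subset_iff.2 hb))
  · exact .inr ((disjoint_singleton_left.2 hb).preimage f)

theorem ae_eq_condExp_of_eqOn_compl_atom {Ω : Type*} {m m₀ : MeasurableSpace Ω} {μ : Measure Ω}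
    (hm : m ≤ m₀) [SigmaFinite (μ.trim hm)] {s : Set Ω} (hs : MeasurableSet[m₀] s)
    (hs_atom : ∀ A, MeasurableSet[m] A → s ⊆ A ∨ Disjoint s A) {f g : Ω → ℝ}
    (hf : Integrable f μ) (hg : Integrable g μ) (hgm : StronglyMeasurable[m] g)
    (hfg : EqOn f g sᶜ) (hs_int : ∫ x in s, g x ∂μ = ∫ x in s, f x ∂μ) :
    g =ᵐ[μ] μ[f|m] := by
  refine ae_eq_condExp_of_forall_setIntegral_eq hm hf (fun _ _ _ => hg.integrableOn) ?_
    hgm.aestronglyMeasurable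
  intro A hA _
  have hA₀ := hm A hA
  rcases hs_atom A hA with hsA | hsA
  · rw [← union_sdiff_cancel hsA, setIntegral_union disjoint_sdiff_right (hA₀.diff hs)
        hg.integrableOn hg.integrableOn,
      setIntegral_union disjoint_sdiff_right (hA₀.diff hs) hf.integrableOn hf.integrableOn,
      hs_int, setIntegral_congr_fun (hA₀.diff hs) (hfg.mono (sdiff_subset_compl _ _)).symm]
  · exact setIntegral_congr_fun hA₀ (hfg.mono (subset_compl_iff_disjoint_left.2 hsA)).symm

namespace ENat

/-- At time `t` one observes `min ω (t + 1)`: the value of `ω` if `ω ≤ t`, and otherwise only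
that `ω > t`. -/
noncomputable def truncFiltration : Filtration ℕ (inferInstance : MeasurableSpace ℕ∞) where
  seq t := MeasurableSpace.comap (fun ω : ℕ∞ => min ω (t + 1)) inferInstance
  mono' s t hst := by
    have hcomp : (fun ω : ℕ∞ => min ω (s + 1)) =
        (fun ω : ℕ∞ => min ω (s + 1)) ∘ fun ω : ℕ∞ => min ω (t + 1) := by
      have hst' : (s : ℕ∞) + 1 ≤ t + 1 := by gcongr
      funext ω
      rw [Function.comp_apply, min_assoc, min_eq_right hst']
    dsimp only
    rw [hcomp, ← MeasurableSpace.comap_comp]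
    exact MeasurableSpace.comap_mono Measurable.of_discrete.comap_le
  le' _ := Measurable.of_discrete.comap_le

lemma Ioi_eq_preimage_min (t : ℕ) :
    Ioi (t : ℕ∞) = (fun ω : ℕ∞ => min ω (t + 1)) ⁻¹' {(t : ℕ∞) + 1} := by
  ext ω
  simp [Order.add_one_le_iff_of_not_isMax (not_isMax_of_lt (natCast_lt_top t))]

lemma measurableSet_truncFiltration_Ioi (t : ℕ) :
    MeasurableSet[truncFiltration t] (Ioi (t : ℕ∞)) := by
  rw [Ioi_eq_preimage_min]
  exact ⟨_, trivial, rfl⟩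

lemma measurableSet_truncFiltration_Iic (t : ℕ) :
    MeasurableSet[truncFiltration t] (Iic (t : ℕ∞)) := by
  simpa using (measurableSet_truncFiltration_Ioi t).compl

lemma Ioi_subset_or_disjoint_of_measurableSet_truncFiltration {t : ℕ} {A : Set ℕ∞}
    (hA : MeasurableSet[truncFiltration t] A) : Ioi (t : ℕ∞) ⊆ A ∨ Disjoint (Ioi (t : ℕ∞)) A := by
  rw [Ioi_eq_preimage_min]
  exact MeasurableSpace.subset_or_disjoint_of_measurableSet_comap hA _

noncomputable def invHazard (μ : Measure ℕ∞) (t : ℕ) : ℝ :=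
  μ.real (Ici (t : ℕ∞)) / μ.real {(t : ℕ∞)}

noncomputable def penaltyProcess (μ : Measure ℕ∞) (t : ℕ) : ℕ∞ → ℝ :=
  (Iic (t : ℕ∞)).indicator fun _ => -invHazard μ t

variable (μ : Measure ℕ∞)

lemma penaltyProcess_of_lt {t : ℕ} {ω : ℕ∞} (h : (t : ℕ∞) < ω) : penaltyProcess μ t ω = 0 :=
  indicator_of_notMem (notMem_Iic.2 h) _

lemma stronglyMeasurable_penaltyProcess (t : ℕ) :
    StronglyMeasurable[truncFiltration t] (penaltyProcess μ t) :=
  stronglyMeasurable_const.indicator (measurableSet_truncFiltration_Iic t)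

lemma integrable_penaltyProcess [IsFiniteMeasure μ] (t : ℕ) : Integrable (penaltyProcess μ t) μ :=
  (integrable_const _).indicator MeasurableSet.of_discrete

lemma setIntegral_Ioi_penaltyProcess_succ [IsFiniteMeasure μ] (hμ : ∀ x, μ {x} ≠ 0) (t : ℕ) :
    ∫ ω in Ioi (t : ℕ∞), penaltyProcess μ (t + 1) ω ∂μ = -μ.real (Ioi (t : ℕ∞)) := by
  have hIoc : Ioi (t : ℕ∞) ∩ Iic ((t + 1 : ℕ) : ℕ∞) = {((t + 1 : ℕ) : ℕ∞)} := by
    ext ω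
    cases ω with
    | top => simp [-Nat.cast_add]
    | coe n =>
      simp only [mem_inter_iff, mem_Ioi, mem_Iic, mem_singleton_iff, Nat.cast_lt, Nat.cast_le,
        Nat.cast_inj]
      omega
  have hIci : Ici ((t + 1 : ℕ) : ℕ∞) = Ioi (t : ℕ∞) := by
    ext ω
    cases ω with
    | top => simp [-Nat.cast_add]
    | coe n =>
      simp only [mem_Ici, mem_Ioi, Nat.cast_lt, Nat.cast_le]
      omega
  have hne : μ.real {((t + 1 : ℕ) : ℕ∞)} ≠ 0 :=
    (measureReal_ne_zero_iff (measure_ne_top μ _)).2 (hμ _)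
  rw [penaltyProcess, setIntegral_indicator MeasurableSet.of_discrete, hIoc, setIntegral_const,
    invHazard, hIci, smul_eq_mul, mul_neg, mul_div_cancel₀ _ hne]

lemma condExp_penaltyProcess_succ_of_lt [IsFiniteMeasure μ] (hμ : ∀ x, μ {x} ≠ 0) {t : ℕ}
    {ω : ℕ∞} (h : (t : ℕ∞) < ω) :
    μ[penaltyProcess μ (t + 1) | truncFiltration t] ω = -1 := by
  classical
  let g := (Ioi (t : ℕ∞)).piecewise (fun _ => (-1 : ℝ)) fun _ => -invHazard μ (t + 1)
  have hg : g =ᵐ[μ] μ[penaltyProcess μ (t + 1) | truncFiltration t] := by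
    refine ae_eq_condExp_of_eqOn_compl_atom (truncFiltration.le t) .of_discrete
      (fun A hA => Ioi_subset_or_disjoint_of_measurableSet_truncFiltration hA)
      (integrable_penaltyProcess μ _)
      (.piecewise .of_discrete (integrable_const _).integrableOn (integrable_const _).integrableOn)
      (.piecewise (measurableSet_truncFiltration_Ioi t) stronglyMeasurable_const
        stronglyMeasurable_const) (fun x hx => ?_) ?_
    · replace hx : x ≤ t := not_lt.1 hx
      rw [show g x = _ from piecewise_eq_of_notMem _ _ _ (not_lt.2 hx), penaltyProcess,
        indicator_of_mem (mem_Iic.2 (hx.trans (by gcongr; omega)))]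
    · rw [setIntegral_Ioi_penaltyProcess_succ μ hμ, setIntegral_congr_fun .of_discrete
        (piecewise_eqOn _ _ _), setIntegral_const, smul_eq_mul, mul_neg_one]
  rw [Filter.EventuallyEq, ae_eq_top.2 hμ, Filter.eventually_top] at hg
  rw [← hg ω]
  exact if_pos h

end ENat

/-- **Unsoundness without expected leftward non-negativity.** There exist a probability
space, a filtration `ℱ`, a stopping time `T` (with values in `ℕ∞`), and a one-dimensional
stochastic process `Y` with the single level set `L t 1 = {T > t}` (which is
`ℱ t`-measurable), satisfying all the defining conditions of a GLexRSM for `T` except the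
expected leftward non-negativity condition — namely: (1) each `Y t` is `ℱ t`-measurable;
(2) each `Y t` is integrable (so all required conditional expectations exist);
(3a)–(3b) `E[Y (t+1) | ℱ t](ω) ≤ Y t ω` and even `≤ Y t ω − 1` on `{T > t}`;
(3c) `Y t ω ≥ 0` on `{T > t}` — and yet `P[T < ∞] < 1`. -/
theorem glexrsm_unsound_without_exp_nneg :
    ∃ (Ω : Type) (mΩ : MeasurableSpace Ω) (μ : Measure Ω),
      IsProbabilityMeasure μ ∧
      ∃ (ℱ : Filtration ℕ mΩ) (T : Ω → ℕ∞) (Y : ℕ → Ω → ℝ),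
        -- `T` is a stopping time with respect to `ℱ`
        (∀ t : ℕ, MeasurableSet[ℱ t] {ω | T ω ≤ (t : ℕ∞)}) ∧
        -- the level set `L t 1 = {T > t}` is `ℱ t`-measurable
        (∀ t : ℕ, MeasurableSet[ℱ t] {ω | (t : ℕ∞) < T ω}) ∧
        -- (1) `Y t` is `ℱ t`-measurable
        (∀ t : ℕ, StronglyMeasurable[ℱ t] (Y t)) ∧
        -- (2) `Y t` is integrable, so the required conditional expectations exist
        (∀ t : ℕ, Integrable (Y t) μ) ∧
        -- (3a) expected non-increase on `L t 1 = {T > t}`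
        (∀ t : ℕ, ∀ ω ∈ {ω | (t : ℕ∞) < T ω}, (μ[Y (t + 1) | ℱ t]) ω ≤ Y t ω) ∧
        -- (3b) expected decrease by 1 on `L t 1 = {T > t}`
        (∀ t : ℕ, ∀ ω ∈ {ω | (t : ℕ∞) < T ω}, (μ[Y (t + 1) | ℱ t]) ω ≤ Y t ω - 1) ∧
        -- (3c) non-negativity on `L t 1 = {T > t}`
        (∀ t : ℕ, ∀ ω ∈ {ω | (t : ℕ∞) < T ω}, 0 ≤ Y t ω) ∧
        -- yet `T` is not almost surely finite
        μ {ω | T ω < ⊤} < 1 := by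
  obtain ⟨μ, hμ₁, hμ⟩ := exists_isProbabilityMeasure_forall_measure_singleton_ne_zero ℕ∞
  have hdecrease (t : ℕ) (ω : ℕ∞) (hω : (t : ℕ∞) < ω) :
      μ[ENat.penaltyProcess μ (t + 1) | ENat.truncFiltration t] ω ≤
        ENat.penaltyProcess μ t ω - 1 := by
    rw [ENat.condExp_penaltyProcess_succ_of_lt μ hμ hω, ENat.penaltyProcess_of_lt μ hω, zero_sub]
  have hfinite : {ω : ℕ∞ | id ω < ⊤} = {⊤}ᶜ := by
    ext
    simp [lt_top_iff_ne_top]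
  refine ⟨ℕ∞, inferInstance, μ, hμ₁, ENat.truncFiltration, id, ENat.penaltyProcess μ,
    ENat.measurableSet_truncFiltration_Iic, ENat.measurableSet_truncFiltration_Ioi,
    ENat.stronglyMeasurable_penaltyProcess μ, ENat.integrable_penaltyProcess μ,
    fun t ω hω => (hdecrease t ω hω).trans (sub_le_self _ zero_le_one), hdecrease,
    fun t ω (hω : (t : ℕ∞) < ω) => (ENat.penaltyProcess_of_lt μ hω).ge, ?_⟩
  rw [hfinite, prob_compl_eq_one_sub .of_discrete]
  exact ENNReal.sub_lt_self ENNReal.one_ne_top one_ne_zero (hμ ⊤)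
end
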